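/- The rate function R(Λ,Q) of the uniformly quantized Laplace source is strictly decreasing in Q for fixed Λ > 0, and R(Λ,Q) → 0 as Q → ∞. -/

import Mathlib

/-- Closed-form rate of the uniformly quantized Laplace(Λ) source. -/
noncomputable def quantLaplaceRate (Λ Q : ℝ) : ℝ :=
  -((1 - Real.exp (-Λ * Q / 2)) * Real.logb 2 (1 - Real.exp (-Λ * Q / 2)))
    - (Real.exp (-Λ * Q / 2) / Real.log 2)
      * (Real.log ((1 - Real.exp (-Λ * Q)) / 2) + Λ * Q / 2
          - Λ * Q / (1 - Real.exp (-Λ * Q)))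

/-!
In the variable `x = exp (-Λ Q / 2)`, which decreases from `1` to `0` as `Q` runs through
`(0, ∞)`, the rate in nats is `F x + G x` with `F x = -log (1 - x) + x (log 2 - log (1 + x))`
and `G x = -x log x · (1 + x²) / (1 - x²)`. Both are strictly increasing on `(0, 1)`; for `G`
the sign of the derivative reduces to the classical bound `-log x > 2 (1 - x) / (1 + x)`.
Both are continuous at `0` with value `0`, for `G` because `x log x → 0`.
-/

open Real Filter Set Topology

lemma strictMonoOn_Ioo_of_hasDerivAt_pos {a b : ℝ} {f f' : ℝ → ℝ}
    (hf : ∀ x ∈ Ioo a b, HasDerivAt f (f' x) x) (hf' : ∀ x ∈ Ioo a b, 0 < f' x) :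
    StrictMonoOn f (Ioo a b) :=
  strictMonoOn_of_hasDerivWithinAt_pos (convex_Ioo a b)
    (fun x hx => (hf x hx).continuousAt.continuousWithinAt)
    (fun x hx => (hf x (interior_subset hx)).hasDerivWithinAt)
    (fun x hx => hf' x (interior_subset hx))

lemma two_mul_one_sub_div_one_add_lt_neg_log {x : ℝ} (hx0 : 0 < x) (hx1 : x < 1) :
    2 * (1 - x) / (1 + x) < -log x := by
  have h := lt_log_one_add_of_pos (sub_pos.2 ((one_lt_inv₀ hx0).2 hx1))
  rw [add_sub_cancel, log_inv, show x⁻¹ - 1 + 2 = x⁻¹ + 1 by ring] at h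
  convert h using 1
  field_simp

noncomputable def rateLogPart (x : ℝ) : ℝ := -log (1 - x) + x * (log 2 - log (1 + x))

noncomputable def rateNegMulLogPart (x : ℝ) : ℝ := negMulLog x * ((1 + x ^ 2) / (1 - x ^ 2))

noncomputable def laplaceRateOfExp (x : ℝ) : ℝ := (rateLogPart x + rateNegMulLogPart x) / log 2

lemma quantLaplaceRate_eq_laplaceRateOfExp {Λ Q : ℝ} (h : Λ * Q ≠ 0) :
    quantLaplaceRate Λ Q = laplaceRateOfExp (exp (-Λ * Q / 2)) := by
  set x := exp (-Λ * Q / 2) with hx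
  have hx1 : x ≠ 1 := by rw [hx, Ne, exp_eq_one_iff]; contrapose! h; linarith
  have hsq : exp (-Λ * Q) = x ^ 2 := by rw [hx, ← exp_nat_mul]; ring_nf
  have h1x : 1 - x ≠ 0 := sub_ne_zero.2 (Ne.symm hx1)
  have h1x' : 1 + x ≠ 0 := by positivity
  have h1xx : 1 - x ^ 2 ≠ 0 := by
    rw [show 1 - x ^ 2 = (1 - x) * (1 + x) by ring]; exact mul_ne_zero h1x h1x'
  have hlog2 : log 2 ≠ 0 := (log_pos one_lt_two).ne'
  unfold quantLaplaceRate laplaceRateOfExp rateLogPart rateNegMulLogPart negMulLog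
  rw [← hx, hsq, logb, show 1 - x ^ 2 = (1 - x) * (1 + x) by ring,
    log_div (mul_ne_zero h1x h1x') two_ne_zero, log_mul h1x h1x',
    show Λ * Q = -2 * log x by rw [hx, log_exp]; ring]
  field_simp
  ring

lemma rateLogPart_strictMonoOn : StrictMonoOn rateLogPart (Ioo (-1) 1) := by
  refine strictMonoOn_Ioo_of_hasDerivAt_pos
    (f' := fun x => (1 + x ^ 2) / ((1 - x) * (1 + x)) + (log 2 - log (1 + x)))
    (fun x ⟨hx0, hx1⟩ => ?_) (fun x ⟨hx0, hx1⟩ => ?_)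
  · have h1x : 1 - x ≠ 0 := by linarith
    have h1x' : 1 + x ≠ 0 := by linarith
    have h : HasDerivAt (fun y => -log (1 - y) + y * (log 2 - log (1 + y))) _ x :=
      (((hasDerivAt_id x).const_sub 1).log h1x).neg.add
        ((hasDerivAt_id x).mul ((((hasDerivAt_id x).const_add 1).log h1x').const_sub (log 2)))
    refine h.congr_deriv ?_
    simp only [id]
    field_simp
    ring
  · have hlog : log (1 + x) < log 2 := log_lt_log (by linarith) (by linarith)
    have : 0 < (1 + x ^ 2) / ((1 - x) * (1 + x)) :=
      div_pos (by positivity) (mul_pos (by linarith) (by linarith))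
    linarith

lemma rateNegMulLogPart_strictMonoOn : StrictMonoOn rateNegMulLogPart (Ioo 0 1) := by
  refine strictMonoOn_Ioo_of_hasDerivAt_pos
    (f' := fun x => (-log x * (1 + 4 * x ^ 2 - x ^ 4) - (1 - x ^ 4)) / (1 - x ^ 2) ^ 2)
    (fun x ⟨hx0, hx1⟩ => ?_) (fun x ⟨hx0, hx1⟩ => ?_)
  · have h1xx : 1 - x ^ 2 ≠ 0 := by nlinarith
    have h : HasDerivAt (fun y => negMulLog y * ((1 + y ^ 2) / (1 - y ^ 2))) _ x :=
      (hasDerivAt_negMulLog hx0.ne').mul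
        (((hasDerivAt_pow 2 x).const_add 1).div ((hasDerivAt_pow 2 x).const_sub 1) h1xx)
    refine h.congr_deriv ?_
    simp only [negMulLog]
    field_simp
    ring
  · have hx2 : x ^ 2 < 1 := by nlinarith
    have hA : 0 < 1 + 4 * x ^ 2 - x ^ 4 := by nlinarith [pow_pos hx0 2]
    have hcubic : 0 < 1 - x + 5 * x ^ 2 + 3 * x ^ 3 := by nlinarith [pow_pos hx0 2, pow_pos hx0 3]
    -- `2 (1 - x) (1 + 4x² - x⁴) - (1 - x⁴) (1 + x) = (1 - x)² (1 - x + 5x² + 3x³)`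
    have hpoly : 1 - x ^ 4 ≤ 2 * (1 - x) / (1 + x) * (1 + 4 * x ^ 2 - x ^ 4) := by
      rw [div_mul_eq_mul_div, le_div_iff₀ (by linarith)]
      nlinarith [mul_pos (pow_pos (sub_pos.2 hx1) 2) hcubic]
    have hlog := mul_lt_mul_of_pos_right (two_mul_one_sub_div_one_add_lt_neg_log hx0 hx1) hA
    exact div_pos (by linarith) (pow_pos (by nlinarith) 2)

lemma laplaceRateOfExp_strictMonoOn : StrictMonoOn laplaceRateOfExp (Ioo 0 1) := by
  intro x hx y hy hxy
  have hF := rateLogPart_strictMonoOn (Ioo_subset_Ioo_left (by norm_num) hx)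
    (Ioo_subset_Ioo_left (by norm_num) hy) hxy
  have hG := rateNegMulLogPart_strictMonoOn hx hy hxy
  unfold laplaceRateOfExp
  gcongr

lemma tendsto_laplaceRateOfExp_nhds_zero : Tendsto laplaceRateOfExp (𝓝 0) (𝓝 0) := by
  have h : ContinuousAt laplaceRateOfExp 0 := by
    unfold laplaceRateOfExp rateLogPart rateNegMulLogPart
    fun_prop (disch := norm_num)
  simpa [laplaceRateOfExp, rateLogPart, rateNegMulLogPart] using h.tendsto

theorem quantLaplaceRate_strictAnti_and_tendsto_zero (Λ : ℝ) (hΛ : 0 < Λ) :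
    StrictAntiOn (fun Q => quantLaplaceRate Λ Q) (Set.Ioi 0) ∧
      Filter.Tendsto (fun Q => quantLaplaceRate Λ Q) Filter.atTop (nhds 0) := by
  have hmaps : MapsTo (fun Q => exp (-Λ * Q / 2)) (Ioi 0) (Ioo 0 1) := fun Q hQ =>
    ⟨exp_pos _, exp_lt_one_iff.2 (by nlinarith [mem_Ioi.1 hQ])⟩
  have hanti : StrictAnti (fun Q => exp (-Λ * Q / 2)) := fun a b hab =>
    exp_lt_exp.2 (by nlinarith)
  have heq : EqOn (laplaceRateOfExp ∘ fun Q => exp (-Λ * Q / 2))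
      (fun Q => quantLaplaceRate Λ Q) (Ioi 0) := fun Q hQ =>
    (quantLaplaceRate_eq_laplaceRateOfExp (mul_pos hΛ hQ).ne').symm
  refine ⟨?_, ?_⟩
  · exact (laplaceRateOfExp_strictMonoOn.comp_strictAntiOn (hanti.strictAntiOn _) hmaps).congr heq
  · have hexp : Tendsto (fun Q => exp (-Λ * Q / 2)) atTop (𝓝 0) :=
      tendsto_exp_atBot.comp <|
        (tendsto_id.const_mul_atTop_of_neg (by linarith : -Λ / 2 < 0)).congr
          fun Q => by simp only [id]; ring
    exact (tendsto_laplaceRateOfExp_nhds_zero.comp hexp).congr'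
      (heq.eventuallyEq_of_mem (Ioi_mem_atTop 0))
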